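/- Normal projections of constant vectors are Jacobi eigenfields with eigenvalue −2 (Lemma 2.2, first part): for every constant vector E ∈ ℝ^{n+1}, the normal projection E^⊥ of a conformal minimal immersion f : ℂ → S^n is a normal field and satisfies 𝓛(E^⊥) = 2 E^⊥ pointwise on ℂ. -/

import Mathlib

open Complex

noncomputable section

/-- Wirtinger derivative `∂_z` of a map `ℂ → ℂ`. -/
def wirtZ (g : ℂ → ℂ) (z : ℂ) : ℂ :=
  (1 / 2 : ℂ) * (fderiv ℝ g z 1 - Complex.I * fderiv ℝ g z Complex.I)

/-- Wirtinger derivative `∂_z̄` of a map `ℂ → ℂ`. -/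
def wirtZbar (g : ℂ → ℂ) (z : ℂ) : ℂ :=
  (1 / 2 : ℂ) * (fderiv ℝ g z 1 + Complex.I * fderiv ℝ g z Complex.I)

/-- Componentwise `∂_z` for vector-valued maps. -/
def WZ {m : ℕ} (g : ℂ → Fin m → ℂ) : ℂ → Fin m → ℂ :=
  fun z i => wirtZ (fun w => g w i) z

/-- Componentwise `∂_z̄` for vector-valued maps. -/
def WZb {m : ℕ} (g : ℂ → Fin m → ℂ) : ℂ → Fin m → ℂ :=
  fun z i => wirtZbar (fun w => g w i) z

/-- Complex-bilinear (non-conjugating) pairing. -/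
def pairC {m : ℕ} (u v : Fin m → ℂ) : ℂ := ∑ i, u i * v i

/-- Componentwise complex conjugation. -/
def conjV {m : ℕ} (u : Fin m → ℂ) : Fin m → ℂ := fun i => (starRingEnd ℂ) (u i)

/-- Complexification of a real vector. -/
def cV {m : ℕ} (u : Fin m → ℝ) : Fin m → ℂ := fun i => (u i : ℂ)

/-- Complexification of a real-vector-valued map. -/
def Fc {m : ℕ} (f : ℂ → Fin m → ℝ) : ℂ → Fin m → ℂ := fun z => cV (f z)

/-- `∂_z` of (the complexification of) a real-valued function. -/
def dZ (ρ : ℂ → ℝ) (z : ℂ) : ℂ := wirtZ (fun w => ((ρ w : ℝ) : ℂ)) z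

/-- `f : ℂ → S^n ⊂ ℝ^{n+1}` is a conformal minimal immersion with conformal factor `ρ`:
`⟨f_z, f_z⟩ = 0`, `⟨f_z, f̄_z⟩ = (1/2) e^{2ρ}`, and `f_{z z̄} = −(1/2) e^{2ρ} f`. -/
def IsConfMinImm {m : ℕ} (f : ℂ → Fin m → ℝ) (ρ : ℂ → ℝ) : Prop :=
  ContDiff ℝ (⊤ : ℕ∞) f ∧ ContDiff ℝ (⊤ : ℕ∞) ρ ∧
  (∀ z, ∑ i, (f z i) ^ 2 = 1) ∧
  (∀ z, pairC (WZ (Fc f) z) (WZ (Fc f) z) = 0) ∧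
  (∀ z, pairC (WZ (Fc f) z) (conjV (WZ (Fc f) z)) = (1 / 2 : ℂ) * (Real.exp (2 * ρ z) : ℂ)) ∧
  (∀ z i, WZb (WZ (Fc f)) z i = -(1 / 2 : ℂ) * (Real.exp (2 * ρ z) : ℂ) * Fc f z i)

/-- The Hopf field `Ω = f_{zz} − 2 ρ_z f_z`. -/
def Hopf {m : ℕ} (f : ℂ → Fin m → ℝ) (ρ : ℂ → ℝ) : ℂ → Fin m → ℂ :=
  fun z i => WZ (WZ (Fc f)) z i - 2 * dZ ρ z * WZ (Fc f) z i

/-- Real part `Ω₁` of the Hopf field, viewed in `ℂ^{n+1}`. -/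
def HopfRe {m : ℕ} (f : ℂ → Fin m → ℝ) (ρ : ℂ → ℝ) : ℂ → Fin m → ℂ :=
  fun z i => ((Hopf f ρ z i).re : ℂ)

/-- Imaginary part `Ω₂` of the Hopf field, viewed in `ℂ^{n+1}`. -/
def HopfIm {m : ℕ} (f : ℂ → Fin m → ℝ) (ρ : ℂ → ℝ) : ℂ → Fin m → ℂ :=
  fun z i => ((Hopf f ρ z i).im : ℂ)

/-- Normal projection `E^⊥` of a constant vector `E ∈ ℝ^{n+1}`. -/
def Eperp {m : ℕ} (f : ℂ → Fin m → ℝ) (ρ : ℂ → ℝ) (E : Fin m → ℝ) : ℂ → Fin m → ℂ :=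
  fun z i => (E i : ℂ) - pairC (cV E) (Fc f z) * Fc f z i
    - 2 * (Real.exp (-2 * ρ z) : ℂ) * pairC (cV E) (WZ (Fc f) z) * WZb (Fc f) z i
    - 2 * (Real.exp (-2 * ρ z) : ℂ) * pairC (cV E) (WZb (Fc f) z) * WZ (Fc f) z i

/-- `ψ` is a normal field along `f`. -/
def IsNormalField {m : ℕ} (f : ℂ → Fin m → ℝ) (ψ : ℂ → Fin m → ℂ) : Prop :=
  ∀ z, pairC (ψ z) (Fc f z) = 0 ∧ pairC (ψ z) (WZ (Fc f) z) = 0 ∧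
    pairC (ψ z) (WZb (Fc f) z) = 0

/-- Normal covariant derivative `N_z ψ = ψ_z + 2 e^{−2ρ} ⟨ψ, Ω⟩ f_z̄`. -/
def NZ {m : ℕ} (f : ℂ → Fin m → ℝ) (ρ : ℂ → ℝ) (ψ : ℂ → Fin m → ℂ) : ℂ → Fin m → ℂ :=
  fun z i => WZ ψ z i
    + 2 * (Real.exp (-2 * ρ z) : ℂ) * pairC (ψ z) (Hopf f ρ z) * WZb (Fc f) z i

/-- Normal covariant derivative `N_z̄ ψ = ψ_z̄ + 2 e^{−2ρ} ⟨ψ, Ω̄⟩ f_z`. -/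
def NZb {m : ℕ} (f : ℂ → Fin m → ℝ) (ρ : ℂ → ℝ) (ψ : ℂ → Fin m → ℂ) : ℂ → Fin m → ℂ :=
  fun z i => WZb ψ z i
    + 2 * (Real.exp (-2 * ρ z) : ℂ) * pairC (ψ z) (conjV (Hopf f ρ z)) * WZ (Fc f) z i

/-- Normal Laplacian `Δ^⊥ ψ = 2 e^{−2ρ} (N_z̄ (N_z ψ) + N_z (N_z̄ ψ))`. -/
def LapPerp {m : ℕ} (f : ℂ → Fin m → ℝ) (ρ : ℂ → ℝ) (ψ : ℂ → Fin m → ℂ) : ℂ → Fin m → ℂ :=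
  fun z i => 2 * (Real.exp (-2 * ρ z) : ℂ) * (NZb f ρ (NZ f ρ ψ) z i + NZ f ρ (NZb f ρ ψ) z i)

/-- Jacobi operator `𝓛 ψ = Δ^⊥ ψ + 2 ψ + 4 e^{−4ρ} (⟨ψ, Ω⟩ Ω̄ + ⟨ψ, Ω̄⟩ Ω)`. -/
def Jacobi {m : ℕ} (f : ℂ → Fin m → ℝ) (ρ : ℂ → ℝ) (ψ : ℂ → Fin m → ℂ) : ℂ → Fin m → ℂ :=
  fun z i => LapPerp f ρ ψ z i + 2 * ψ z i
    + 4 * (Real.exp (-4 * ρ z) : ℂ) *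
      (pairC (ψ z) (Hopf f ρ z) * conjV (Hopf f ρ z) i
        + pairC (ψ z) (conjV (Hopf f ρ z)) * Hopf f ρ z i)

/-- The S⁴ adapted frame setup: `⟨Ω, Ω⟩ ≡ 1`, `Ω₁ = cosh θ · ψ₃`, `Ω₂ = sinh θ · ψ₄`
with `ψ₃, ψ₄` orthonormal normal fields. -/
def S4Frame (f : ℂ → Fin 5 → ℝ) (ρ : ℂ → ℝ) (ψ₃ ψ₄ : ℂ → Fin 5 → ℝ) (θ : ℂ → ℝ) : Prop :=
  ContDiff ℝ (⊤ : ℕ∞) ψ₃ ∧ ContDiff ℝ (⊤ : ℕ∞) ψ₄ ∧ ContDiff ℝ (⊤ : ℕ∞) θ ∧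
  IsNormalField f (Fc ψ₃) ∧ IsNormalField f (Fc ψ₄) ∧
  (∀ z, ∑ i, (ψ₃ z i) ^ 2 = 1) ∧ (∀ z, ∑ i, (ψ₄ z i) ^ 2 = 1) ∧
  (∀ z, ∑ i, ψ₃ z i * ψ₄ z i = 0) ∧
  (∀ z, pairC (Hopf f ρ z) (Hopf f ρ z) = 1) ∧
  (∀ z i, (Hopf f ρ z i).re = Real.cosh (θ z) * ψ₃ z i) ∧
  (∀ z i, (Hopf f ρ z i).im = Real.sinh (θ z) * ψ₄ z i)


section calc1
variable {g h : ℂ → ℂ} {z : ℂ}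

lemma wirtZ_const (c : ℂ) (z : ℂ) : wirtZ (fun _ => c) z = 0 := by
  simp [wirtZ]

lemma wirtZbar_const (c : ℂ) (z : ℂ) : wirtZbar (fun _ => c) z = 0 := by
  simp [wirtZbar]

lemma wirtZ_add (hg : DifferentiableAt ℝ g z) (hh : DifferentiableAt ℝ h z) :
    wirtZ (fun w => g w + h w) z = wirtZ g z + wirtZ h z := by
  simp only [wirtZ, fderiv_fun_add hg hh, ContinuousLinearMap.add_apply]; ring

lemma wirtZ_sub (hg : DifferentiableAt ℝ g z) (hh : DifferentiableAt ℝ h z) :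
    wirtZ (fun w => g w - h w) z = wirtZ g z - wirtZ h z := by
  simp only [wirtZ, fderiv_fun_sub hg hh, ContinuousLinearMap.sub_apply]; ring

lemma wirtZbar_sub (hg : DifferentiableAt ℝ g z) (hh : DifferentiableAt ℝ h z) :
    wirtZbar (fun w => g w - h w) z = wirtZbar g z - wirtZbar h z := by
  simp only [wirtZbar, fderiv_fun_sub hg hh, ContinuousLinearMap.sub_apply]; ring

lemma wirtZ_mul (hg : DifferentiableAt ℝ g z) (hh : DifferentiableAt ℝ h z) :
    wirtZ (fun w => g w * h w) z = wirtZ g z * h z + g z * wirtZ h z := by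
  simp only [wirtZ, fderiv_fun_mul hg hh, ContinuousLinearMap.add_apply,
    ContinuousLinearMap.smul_apply, smul_eq_mul]; ring

lemma wirtZbar_mul (hg : DifferentiableAt ℝ g z) (hh : DifferentiableAt ℝ h z) :
    wirtZbar (fun w => g w * h w) z = wirtZbar g z * h z + g z * wirtZbar h z := by
  simp only [wirtZbar, fderiv_fun_mul hg hh, ContinuousLinearMap.add_apply,
    ContinuousLinearMap.smul_apply, smul_eq_mul]; ring

lemma wirtZ_sum {ι : Type*} (s : Finset ι) (g : ι → ℂ → ℂ)
    (hg : ∀ i ∈ s, DifferentiableAt ℝ (g i) z) :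
    wirtZ (fun w => ∑ i ∈ s, g i w) z = ∑ i ∈ s, wirtZ (g i) z := by
  simp only [wirtZ, fderiv_fun_sum hg, ContinuousLinearMap.coe_sum', Finset.sum_apply,
    mul_sub, Finset.mul_sum]
  rw [← Finset.sum_sub_distrib]


lemma wirtZbar_sum {ι : Type*} (s : Finset ι) (g : ι → ℂ → ℂ)
    (hg : ∀ i ∈ s, DifferentiableAt ℝ (g i) z) :
    wirtZbar (fun w => ∑ i ∈ s, g i w) z = ∑ i ∈ s, wirtZbar (g i) z := by
  simp only [wirtZbar, fderiv_fun_sum hg, ContinuousLinearMap.coe_sum', Finset.sum_apply,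
    mul_add, Finset.mul_sum]
  rw [← Finset.sum_add_distrib]


lemma fderiv_conj_apply (g : ℂ → ℂ) (z v : ℂ) :
    fderiv ℝ (fun w => (starRingEnd ℂ) (g w)) z v = (starRingEnd ℂ) (fderiv ℝ g z v) := by
  have : (fun w => (starRingEnd ℂ) (g w)) = (⇑Complex.conjCLE ∘ g) := rfl
  rw [this, ContinuousLinearEquiv.comp_fderiv]
  rfl

lemma wirtZ_conj (g : ℂ → ℂ) (z : ℂ) :
    wirtZ (fun w => (starRingEnd ℂ) (g w)) z = (starRingEnd ℂ) (wirtZbar g z) := by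
  simp only [wirtZ, wirtZbar, fderiv_conj_apply, map_mul, map_add, map_sub, Complex.conj_I, map_div₀, map_one, map_ofNat]
  ring

lemma wirtZbar_conj (g : ℂ → ℂ) (z : ℂ) :
    wirtZbar (fun w => (starRingEnd ℂ) (g w)) z = (starRingEnd ℂ) (wirtZ g z) := by
  simp only [wirtZ, wirtZbar, fderiv_conj_apply, map_mul, map_add, map_sub, Complex.conj_I, map_div₀, map_one, map_ofNat]
  ring

lemma contDiff_wirtZ (hg : ContDiff ℝ (⊤ : ℕ∞) g) : ContDiff ℝ (⊤ : ℕ∞) (wirtZ g) := by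
  have hD : ContDiff ℝ (⊤ : ℕ∞) (fderiv ℝ g) := hg.fderiv_right (by simp)
  exact contDiff_const.mul ((hD.clm_apply contDiff_const).sub
    (contDiff_const.mul (hD.clm_apply contDiff_const)))

lemma contDiff_wirtZbar (hg : ContDiff ℝ (⊤ : ℕ∞) g) : ContDiff ℝ (⊤ : ℕ∞) (wirtZbar g) := by
  have hD : ContDiff ℝ (⊤ : ℕ∞) (fderiv ℝ g) := hg.fderiv_right (by simp)
  exact contDiff_const.mul ((hD.clm_apply contDiff_const).add
    (contDiff_const.mul (hD.clm_apply contDiff_const)))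

lemma wirtZ_wirtZbar_comm (hg : ContDiff ℝ (⊤ : ℕ∞) g) (z : ℂ) :
    wirtZ (wirtZbar g) z = wirtZbar (wirtZ g) z := by
  have hD : ContDiff ℝ (⊤ : ℕ∞) (fderiv ℝ g) := hg.fderiv_right (by simp)
  have hDz : DifferentiableAt ℝ (fderiv ℝ g) z := hD.differentiable (by simp) z
  have key : ∀ u v : ℂ, fderiv ℝ (fun w => fderiv ℝ g w u) z v = fderiv ℝ (fderiv ℝ g) z v u := by
    intro u v
    rw [fderiv_clm_apply hDz (differentiableAt_const u)]
    simp
  have hsymm : ∀ u v : ℂ, fderiv ℝ (fderiv ℝ g) z u v = fderiv ℝ (fderiv ℝ g) z v u := by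
    intro u v
    exact (hg.contDiffAt.isSymmSndFDerivAt (by rw [minSmoothness_of_isRCLikeNormedField]; exact WithTop.coe_le_coe.mpr (le_top : (2 : ℕ∞) ≤ ⊤))).eq u v
  have hA : ∀ u : ℂ, DifferentiableAt ℝ (fun w => fderiv ℝ g w u) z := by
    intro u
    exact hDz.clm_apply (differentiableAt_const u)
  have e1 : wirtZbar g = fun w => (1/2 : ℂ) * ((fun w => fderiv ℝ g w 1) w
      + Complex.I * (fun w => fderiv ℝ g w Complex.I) w) := rfl
  have e2 : wirtZ g = fun w => (1/2 : ℂ) * ((fun w => fderiv ℝ g w 1) w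
      - Complex.I * (fun w => fderiv ℝ g w Complex.I) w) := rfl
  rw [e1, e2]
  rw [show (fun w => (1/2 : ℂ) * ((fun w => fderiv ℝ g w 1) w
      + Complex.I * (fun w => fderiv ℝ g w Complex.I) w)) =
      (fun w => (fun _ => (1/2 : ℂ)) w * ((fun w => fderiv ℝ g w 1) w
      + (fun _ => Complex.I) w * (fun w => fderiv ℝ g w Complex.I) w)) from rfl]
  rw [wirtZ_mul (differentiableAt_const _) ((hA 1).fun_add ((differentiableAt_const _).fun_mul (hA I))),
    wirtZ_add (hA 1) ((differentiableAt_const _).fun_mul (hA I)),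
    wirtZ_mul (differentiableAt_const _) (hA I)]
  rw [show (fun w => (1/2 : ℂ) * ((fun w => fderiv ℝ g w 1) w
      - Complex.I * (fun w => fderiv ℝ g w Complex.I) w)) =
      (fun w => (fun _ => (1/2 : ℂ)) w * ((fun w => fderiv ℝ g w 1) w
      - (fun _ => Complex.I) w * (fun w => fderiv ℝ g w Complex.I) w)) from rfl]
  rw [wirtZbar_mul (differentiableAt_const _) ((hA 1).fun_sub ((differentiableAt_const _).fun_mul (hA I))),
    wirtZbar_sub (hA 1) ((differentiableAt_const _).fun_mul (hA I)),
    wirtZbar_mul (differentiableAt_const _) (hA I)]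
  simp only [wirtZ, wirtZbar, wirtZ_const, wirtZbar_const, key, fderiv_fun_const,
    ContinuousLinearMap.zero_apply, Pi.zero_apply]
  rw [hsymm 1 Complex.I]
  ring

end calc1

section calc2
variable {g1 g2 g3 g4 : ℂ → ℂ} {z : ℂ}

lemma wirtZ_mul3 (h1 : DifferentiableAt ℝ g1 z) (h2 : DifferentiableAt ℝ g2 z)
    (h3 : DifferentiableAt ℝ g3 z) :
    wirtZ (fun w => g1 w * g2 w * g3 w) z
      = wirtZ g1 z * g2 z * g3 z + g1 z * wirtZ g2 z * g3 z + g1 z * g2 z * wirtZ g3 z := by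
  rw [show (fun w => g1 w * g2 w * g3 w) = fun w => (fun w => g1 w * g2 w) w * g3 w from rfl,
    wirtZ_mul (h1.fun_mul h2) h3, wirtZ_mul h1 h2]
  ring

lemma wirtZ_mul4 (h1 : DifferentiableAt ℝ g1 z) (h2 : DifferentiableAt ℝ g2 z)
    (h3 : DifferentiableAt ℝ g3 z) (h4 : DifferentiableAt ℝ g4 z) :
    wirtZ (fun w => g1 w * g2 w * g3 w * g4 w) z
      = wirtZ g1 z * g2 z * g3 z * g4 z + g1 z * wirtZ g2 z * g3 z * g4 z
        + g1 z * g2 z * wirtZ g3 z * g4 z + g1 z * g2 z * g3 z * wirtZ g4 z := by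
  rw [show (fun w => g1 w * g2 w * g3 w * g4 w)
      = fun w => (fun w => g1 w * g2 w * g3 w) w * g4 w from rfl,
    wirtZ_mul ((h1.fun_mul h2).fun_mul h3) h4, wirtZ_mul3 h1 h2 h3]
  ring

lemma wirtZbar_mul3 (h1 : DifferentiableAt ℝ g1 z) (h2 : DifferentiableAt ℝ g2 z)
    (h3 : DifferentiableAt ℝ g3 z) :
    wirtZbar (fun w => g1 w * g2 w * g3 w) z
      = wirtZbar g1 z * g2 z * g3 z + g1 z * wirtZbar g2 z * g3 z
        + g1 z * g2 z * wirtZbar g3 z := by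
  rw [show (fun w => g1 w * g2 w * g3 w) = fun w => (fun w => g1 w * g2 w) w * g3 w from rfl,
    wirtZbar_mul (h1.fun_mul h2) h3, wirtZbar_mul h1 h2]
  ring

lemma wirtZbar_mul4 (h1 : DifferentiableAt ℝ g1 z) (h2 : DifferentiableAt ℝ g2 z)
    (h3 : DifferentiableAt ℝ g3 z) (h4 : DifferentiableAt ℝ g4 z) :
    wirtZbar (fun w => g1 w * g2 w * g3 w * g4 w) z
      = wirtZbar g1 z * g2 z * g3 z * g4 z + g1 z * wirtZbar g2 z * g3 z * g4 z
        + g1 z * g2 z * wirtZbar g3 z * g4 z + g1 z * g2 z * g3 z * wirtZbar g4 z := by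
  rw [show (fun w => g1 w * g2 w * g3 w * g4 w)
      = fun w => (fun w => g1 w * g2 w * g3 w) w * g4 w from rfl,
    wirtZbar_mul ((h1.fun_mul h2).fun_mul h3) h4, wirtZbar_mul3 h1 h2 h3]
  ring

/-- chain rule for `exp (c * ρ)` composed with `ofReal`. -/
lemma wirtZ_exp_mul (c : ℝ) (ρ : ℂ → ℝ) (z : ℂ) (hρ : DifferentiableAt ℝ ρ z) :
    wirtZ (fun w => ((Real.exp (c * ρ w) : ℝ) : ℂ)) z
      = (c : ℂ) * wirtZ (fun w => ((ρ w : ℝ) : ℂ)) z * ((Real.exp (c * ρ z) : ℝ) : ℂ) := by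
  have h1 : HasFDerivAt (fun w => Real.exp (c * ρ w))
      ((Real.exp (c * ρ z)) • (c • fderiv ℝ ρ z)) z :=
    by have := (Real.hasDerivAt_exp (c * ρ z)).comp_hasFDerivAt z (hρ.hasFDerivAt.const_mul c); exact this
  have h2 : fderiv ℝ (fun w => ((Real.exp (c * ρ w) : ℝ) : ℂ)) z
      = Complex.ofRealCLM.comp ((Real.exp (c * ρ z)) • (c • fderiv ℝ ρ z)) :=
    (Complex.ofRealCLM.hasFDerivAt.comp z h1).fderiv
  have h3 : fderiv ℝ (fun w => ((ρ w : ℝ) : ℂ)) z = Complex.ofRealCLM.comp (fderiv ℝ ρ z) :=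
    (Complex.ofRealCLM.hasFDerivAt.comp z hρ.hasFDerivAt).fderiv
  simp only [wirtZ, h2, h3, ContinuousLinearMap.coe_comp', Function.comp_apply,
    ContinuousLinearMap.coe_smul', Pi.smul_apply, smul_eq_mul, Complex.ofRealCLM_apply]
  push_cast
  ring

lemma wirtZbar_exp_mul (c : ℝ) (ρ : ℂ → ℝ) (z : ℂ) (hρ : DifferentiableAt ℝ ρ z) :
    wirtZbar (fun w => ((Real.exp (c * ρ w) : ℝ) : ℂ)) z
      = (c : ℂ) * wirtZbar (fun w => ((ρ w : ℝ) : ℂ)) z * ((Real.exp (c * ρ z) : ℝ) : ℂ) := by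
  have h1 : HasFDerivAt (fun w => Real.exp (c * ρ w))
      ((Real.exp (c * ρ z)) • (c • fderiv ℝ ρ z)) z :=
    by have := (Real.hasDerivAt_exp (c * ρ z)).comp_hasFDerivAt z (hρ.hasFDerivAt.const_mul c); exact this
  have h2 : fderiv ℝ (fun w => ((Real.exp (c * ρ w) : ℝ) : ℂ)) z
      = Complex.ofRealCLM.comp ((Real.exp (c * ρ z)) • (c • fderiv ℝ ρ z)) :=
    (Complex.ofRealCLM.hasFDerivAt.comp z h1).fderiv
  have h3 : fderiv ℝ (fun w => ((ρ w : ℝ) : ℂ)) z = Complex.ofRealCLM.comp (fderiv ℝ ρ z) :=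
    (Complex.ofRealCLM.hasFDerivAt.comp z hρ.hasFDerivAt).fderiv
  simp only [wirtZbar, h2, h3, ContinuousLinearMap.coe_comp', Function.comp_apply,
    ContinuousLinearMap.coe_smul', Pi.smul_apply, smul_eq_mul, Complex.ofRealCLM_apply]
  push_cast
  ring

/-- `∂_z̄` of a real-valued function is the conjugate of `∂_z`. -/
lemma wirtZbar_real (h : ℂ → ℝ) (z : ℂ) :
    wirtZbar (fun w => ((h w : ℝ) : ℂ)) z
      = (starRingEnd ℂ) (wirtZ (fun w => ((h w : ℝ) : ℂ)) z) := by
  rw [← wirtZbar_conj]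
  congr 1
  funext w
  exact (Complex.conj_ofReal _).symm

end calc2


section pairCalc
variable {m : ℕ}

lemma pairC_comm (u v : Fin m → ℂ) : pairC u v = pairC v u := by
  simp [pairC, mul_comm]

lemma pairC_conj (u v : Fin m → ℂ) :
    pairC (conjV u) (conjV v) = (starRingEnd ℂ) (pairC u v) := by
  simp [pairC, conjV, map_sum]

lemma conjV_cV (u : Fin m → ℝ) : conjV (cV u) = cV u := by
  funext i; simp [conjV, cV, Complex.conj_ofReal]

lemma pairC_lin4 (u1 u2 u3 u4 X : Fin m → ℂ) (c2 c3 c4 : ℂ) :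
    pairC (fun i => u1 i - c2 * u2 i - c3 * u3 i - c4 * u4 i) X
      = pairC u1 X - c2 * pairC u2 X - c3 * pairC u3 X - c4 * pairC u4 X := by
  simp only [pairC, sub_mul, Finset.sum_sub_distrib, mul_assoc, ← Finset.mul_sum]

lemma pairC_sub_smul_left (u v X : Fin m → ℂ) (c : ℂ) :
    pairC (fun i => u i - c * v i) X = pairC u X - c * pairC v X := by
  simp only [pairC, sub_mul, Finset.sum_sub_distrib, mul_assoc, ← Finset.mul_sum]

lemma pairC_sub_smul_right (X u v : Fin m → ℂ) (c : ℂ) :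
    pairC X (fun i => u i - c * v i) = pairC X u - c * pairC X v := by
  rw [pairC_comm, pairC_sub_smul_left, pairC_comm u X, pairC_comm v X]

lemma wirtZ_pairC (u v : ℂ → Fin m → ℂ) (z : ℂ)
    (hu : ∀ i, DifferentiableAt ℝ (fun w => u w i) z)
    (hv : ∀ i, DifferentiableAt ℝ (fun w => v w i) z) :
    wirtZ (fun w => pairC (u w) (v w)) z = pairC (WZ u z) (v z) + pairC (u z) (WZ v z) := by
  rw [show (fun w => pairC (u w) (v w))
      = fun w => ∑ i, (fun w => u w i * v w i) w from rfl,
    wirtZ_sum _ _ (fun i _ => (hu i).fun_mul (hv i))]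
  simp only [pairC, WZ]
  rw [← Finset.sum_add_distrib]
  refine Finset.sum_congr rfl fun i _ => ?_
  rw [wirtZ_mul (hu i) (hv i)]

lemma wirtZbar_pairC (u v : ℂ → Fin m → ℂ) (z : ℂ)
    (hu : ∀ i, DifferentiableAt ℝ (fun w => u w i) z)
    (hv : ∀ i, DifferentiableAt ℝ (fun w => v w i) z) :
    wirtZbar (fun w => pairC (u w) (v w)) z
      = pairC (WZb u z) (v z) + pairC (u z) (WZb v z) := by
  rw [show (fun w => pairC (u w) (v w))
      = fun w => ∑ i, (fun w => u w i * v w i) w from rfl,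
    wirtZbar_sum _ _ (fun i _ => (hu i).fun_mul (hv i))]
  simp only [pairC, WZb]
  rw [← Finset.sum_add_distrib]
  refine Finset.sum_congr rfl fun i _ => ?_
  rw [wirtZbar_mul (hu i) (hv i)]

end pairCalc

section pairCalc2
variable {m : ℕ}

lemma pairC_smul_left (c : ℂ) (u X : Fin m → ℂ) :
    pairC (fun i => c * u i) X = c * pairC u X := by
  simp only [pairC, mul_assoc, ← Finset.mul_sum]

lemma pairC_smul_right (c : ℂ) (X u : Fin m → ℂ) :
    pairC X (fun i => c * u i) = c * pairC X u := by
  rw [pairC_comm, pairC_smul_left, pairC_comm u X]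

lemma pairC_add_left (u v X : Fin m → ℂ) :
    pairC (fun i => u i + v i) X = pairC u X + pairC v X := by
  simp only [pairC, add_mul, Finset.sum_add_distrib]

lemma pairC_sub_left' (u v X : Fin m → ℂ) :
    pairC (fun i => u i - v i) X = pairC u X - pairC v X := by
  simp only [pairC, sub_mul, Finset.sum_sub_distrib]

lemma conjV_conjV (u : Fin m → ℂ) : conjV (conjV u) = u := by
  funext i; simp [conjV]

end pairCalc2

section Main
variable {m : ℕ} {f : ℂ → Fin m → ℝ} {ρ : ℂ → ℝ}

lemma smooth_F (hf : ContDiff ℝ (⊤ : ℕ∞) f) (i : Fin m) : ContDiff ℝ (⊤ : ℕ∞) (fun w => Fc f w i) :=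
  Complex.ofRealCLM.contDiff.comp (contDiff_pi.mp hf i)

lemma smooth_Fz (hf : ContDiff ℝ (⊤ : ℕ∞) f) (i : Fin m) :
    ContDiff ℝ (⊤ : ℕ∞) (fun w => WZ (Fc f) w i) :=
  contDiff_wirtZ (smooth_F hf i)

lemma smooth_Fzb (hf : ContDiff ℝ (⊤ : ℕ∞) f) (i : Fin m) :
    ContDiff ℝ (⊤ : ℕ∞) (fun w => WZb (Fc f) w i) :=
  contDiff_wirtZbar (smooth_F hf i)

lemma smooth_Fzz (hf : ContDiff ℝ (⊤ : ℕ∞) f) (i : Fin m) :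
    ContDiff ℝ (⊤ : ℕ∞) (fun w => WZ (WZ (Fc f)) w i) :=
  contDiff_wirtZ (smooth_Fz hf i)

lemma smooth_rhoC (hρ : ContDiff ℝ (⊤ : ℕ∞) ρ) : ContDiff ℝ (⊤ : ℕ∞) (fun w => ((ρ w : ℝ) : ℂ)) :=
  Complex.ofRealCLM.contDiff.comp hρ

lemma smooth_dZ (hρ : ContDiff ℝ (⊤ : ℕ∞) ρ) : ContDiff ℝ (⊤ : ℕ∞) (dZ ρ) :=
  contDiff_wirtZ (smooth_rhoC hρ)

lemma smooth_exp (hρ : ContDiff ℝ (⊤ : ℕ∞) ρ) (c : ℝ) :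
    ContDiff ℝ (⊤ : ℕ∞) (fun w => ((Real.exp (c * ρ w) : ℝ) : ℂ)) :=
  Complex.ofRealCLM.contDiff.comp (Real.contDiff_exp.comp (contDiff_const.mul hρ))

lemma smooth_Hopf (hf : ContDiff ℝ (⊤ : ℕ∞) f) (hρ : ContDiff ℝ (⊤ : ℕ∞) ρ) (i : Fin m) :
    ContDiff ℝ (⊤ : ℕ∞) (fun w => Hopf f ρ w i) :=
  (smooth_Fzz hf i).sub ((contDiff_const.mul (smooth_dZ hρ)).mul (smooth_Fz hf i))

/-- `⟨F,F⟩ = 1`. -/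
lemma id_FF (hf : IsConfMinImm f ρ) (z : ℂ) : pairC (Fc f z) (Fc f z) = 1 := by
  have h := hf.2.2.1 z
  have e1 : pairC (Fc f z) (Fc f z) = ((∑ i, (f z i) ^ 2 : ℝ) : ℂ) := by
    simp only [pairC, Fc, cV]
    push_cast
    ring_nf
  rw [e1, h]
  norm_num

/-- `F_z̄ = conj F_z` componentwise. -/
lemma id_Fzb_conj (z : ℂ) (i : Fin m) :
    WZb (Fc f) z i = (starRingEnd ℂ) (WZ (Fc f) z i) :=
  wirtZbar_real (fun w => f w i) z

lemma id_Fzb_eq (z : ℂ) : WZb (Fc f) z = conjV (WZ (Fc f) z) :=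
  funext fun i => id_Fzb_conj z i

/-- `⟨F, F_z⟩ = 0`. -/
lemma id_FFz (hf : IsConfMinImm f ρ) (z : ℂ) : pairC (Fc f z) (WZ (Fc f) z) = 0 := by
  have dF : ∀ i, DifferentiableAt ℝ (fun w => Fc f w i) z := fun i =>
    (smooth_F hf.1 i).differentiable (by simp) z
  have e1 := wirtZ_pairC (Fc f) (Fc f) z dF dF
  rw [show (fun w => pairC (Fc f w) (Fc f w)) = fun _ => (1 : ℂ) from
    funext (fun w => id_FF hf w), wirtZ_const] at e1
  rw [pairC_comm (WZ (Fc f) z) (Fc f z)] at e1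
  linear_combination -e1 / 2

/-- `⟨F, F_z̄⟩ = 0`. -/
lemma id_FFzb (hf : IsConfMinImm f ρ) (z : ℂ) : pairC (Fc f z) (WZb (Fc f) z) = 0 := by
  have e1 : pairC (Fc f z) (WZb (Fc f) z)
      = (starRingEnd ℂ) (pairC (Fc f z) (WZ (Fc f) z)) := by
    rw [← pairC_conj, id_Fzb_eq]
    congr 1
    rw [show Fc f z = cV (f z) from rfl, conjV_cV]
  rw [e1, id_FFz hf, map_zero]

/-- `⟨F_z, F_z̄⟩ = (1/2) e^{2ρ}`. -/
lemma id_FzFzb (hf : IsConfMinImm f ρ) (z : ℂ) :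
    pairC (WZ (Fc f) z) (WZb (Fc f) z) = (1 / 2 : ℂ) * (Real.exp (2 * ρ z) : ℂ) := by
  rw [id_Fzb_eq]
  exact hf.2.2.2.2.1 z

/-- mixed derivative in the other order. -/
lemma id_Fzbz (hf : IsConfMinImm f ρ) (z : ℂ) (i : Fin m) :
    WZ (WZb (Fc f)) z i = -(1 / 2 : ℂ) * (Real.exp (2 * ρ z) : ℂ) * Fc f z i := by
  have : WZ (WZb (Fc f)) z i = WZb (WZ (Fc f)) z i :=
    wirtZ_wirtZbar_comm (smooth_F hf.1 i) z
  rw [this]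
  exact hf.2.2.2.2.2 z i

/-- `⟨F, F_zz⟩ = 0`. -/
lemma id_FFzz (hf : IsConfMinImm f ρ) (z : ℂ) : pairC (Fc f z) (WZ (WZ (Fc f)) z) = 0 := by
  have dF : ∀ i, DifferentiableAt ℝ (fun w => Fc f w i) z := fun i =>
    (smooth_F hf.1 i).differentiable (by simp) z
  have dFz : ∀ i, DifferentiableAt ℝ (fun w => WZ (Fc f) w i) z := fun i =>
    (smooth_Fz hf.1 i).differentiable (by simp) z
  have e1 := wirtZ_pairC (Fc f) (WZ (Fc f)) z dF dFz
  rw [show (fun w => pairC (Fc f w) (WZ (Fc f) w)) = fun _ => (0 : ℂ) from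
    funext (fun w => id_FFz hf w), wirtZ_const] at e1
  have e2 := hf.2.2.2.1 z
  -- note : WZ (WZ (Fc f)) appears as WZ of WZ
  linear_combination -e1 - e2

/-- `⟨F_z, F_zz⟩ = 0`. -/
lemma id_FzFzz (hf : IsConfMinImm f ρ) (z : ℂ) :
    pairC (WZ (Fc f) z) (WZ (WZ (Fc f)) z) = 0 := by
  have dFz : ∀ i, DifferentiableAt ℝ (fun w => WZ (Fc f) w i) z := fun i =>
    (smooth_Fz hf.1 i).differentiable (by simp) z
  have e1 := wirtZ_pairC (WZ (Fc f)) (WZ (Fc f)) z dFz dFz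
  rw [show (fun w => pairC (WZ (Fc f) w) (WZ (Fc f) w)) = fun _ => (0 : ℂ) from
    funext (fun w => hf.2.2.2.1 w), wirtZ_const] at e1
  rw [pairC_comm (WZ (WZ (Fc f)) z) (WZ (Fc f) z)] at e1
  linear_combination -e1 / 2

/-- `⟨F_zz, F_z̄⟩ = ρ_z e^{2ρ}`. -/
lemma id_FzzFzb (hf : IsConfMinImm f ρ) (z : ℂ) :
    pairC (WZ (WZ (Fc f)) z) (WZb (Fc f) z) = dZ ρ z * (Real.exp (2 * ρ z) : ℂ) := by
  have dFz : ∀ i, DifferentiableAt ℝ (fun w => WZ (Fc f) w i) z := fun i =>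
    (smooth_Fz hf.1 i).differentiable (by simp) z
  have dFzb : ∀ i, DifferentiableAt ℝ (fun w => WZb (Fc f) w i) z := fun i =>
    (smooth_Fzb hf.1 i).differentiable (by simp) z
  have e1 := wirtZ_pairC (WZ (Fc f)) (WZb (Fc f)) z dFz dFzb
  rw [show (fun w => pairC (WZ (Fc f) w) (WZb (Fc f) w))
      = fun w => (fun _ => (1/2 : ℂ)) w * (fun w => ((Real.exp (2 * ρ w) : ℝ) : ℂ)) w from
    funext (fun w => id_FzFzb hf w), wirtZ_mul (differentiableAt_const _)
      ((smooth_exp hf.2.1 2).differentiable (by simp) z), wirtZ_const,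
    wirtZ_exp_mul 2 ρ z (hf.2.1.differentiable (by simp) z)] at e1
  rw [show WZ (WZb (Fc f)) z
      = fun i => (-(1/2 : ℂ) * (Real.exp (2 * ρ z) : ℂ)) * Fc f z i from
    funext (fun i => by rw [id_Fzbz hf]), pairC_smul_right] at e1
  rw [pairC_comm (WZ (Fc f) z) (Fc f z), id_FFz hf] at e1
  rw [show dZ ρ z = wirtZ (fun w => ((ρ w : ℝ) : ℂ)) z from rfl]
  push_cast at e1 ⊢
  linear_combination -e1

/-- `⟨F, Ω⟩ = 0`. -/
lemma id_FHopf (hf : IsConfMinImm f ρ) (z : ℂ) : pairC (Fc f z) (Hopf f ρ z) = 0 := by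
  rw [show Hopf f ρ z
      = fun i => WZ (WZ (Fc f)) z i - (2 * dZ ρ z) * WZ (Fc f) z i from rfl,
    pairC_sub_smul_right, id_FFzz hf, id_FFz hf]
  ring

/-- `⟨F_z, Ω⟩ = 0`. -/
lemma id_FzHopf (hf : IsConfMinImm f ρ) (z : ℂ) : pairC (WZ (Fc f) z) (Hopf f ρ z) = 0 := by
  rw [show Hopf f ρ z
      = fun i => WZ (WZ (Fc f)) z i - (2 * dZ ρ z) * WZ (Fc f) z i from rfl,
    pairC_sub_smul_right, id_FzFzz hf, hf.2.2.2.1 z]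
  ring

/-- `⟨F_z̄, Ω⟩ = 0`. -/
lemma id_FzbHopf (hf : IsConfMinImm f ρ) (z : ℂ) : pairC (WZb (Fc f) z) (Hopf f ρ z) = 0 := by
  rw [show Hopf f ρ z
      = fun i => WZ (WZ (Fc f)) z i - (2 * dZ ρ z) * WZ (Fc f) z i from rfl,
    pairC_sub_smul_right, pairC_comm (WZb (Fc f) z) (WZ (WZ (Fc f)) z), id_FzzFzb hf,
    pairC_comm (WZb (Fc f) z) (WZ (Fc f) z), id_FzFzb hf]
  ring

/-- `F_z̄z̄ = conj F_zz`. -/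
lemma id_Fzzbb (hf : IsConfMinImm f ρ) (z : ℂ) (i : Fin m) :
    WZb (WZb (Fc f)) z i = (starRingEnd ℂ) (WZ (WZ (Fc f)) z i) := by
  have e1 : (fun w => WZb (Fc f) w i)
      = fun w => (starRingEnd ℂ) ((fun w => WZ (Fc f) w i) w) :=
    funext fun w => id_Fzb_conj w i
  show wirtZbar (fun w => WZb (Fc f) w i) z = _
  rw [e1, wirtZbar_conj]
  rfl

/-- conj of `ρ_z`. -/
lemma id_dZbar (z : ℂ) :
    wirtZbar (fun w => ((ρ w : ℝ) : ℂ)) z = (starRingEnd ℂ) (dZ ρ z) :=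
  wirtZbar_real ρ z

/-- `F_{zzz̄} = -ρ_z e^{2ρ} F - (1/2) e^{2ρ} F_z`. -/
lemma id_Fzzzb (hf : IsConfMinImm f ρ) (z : ℂ) (i : Fin m) :
    WZb (WZ (WZ (Fc f))) z i
      = -(dZ ρ z) * (Real.exp (2 * ρ z) : ℂ) * Fc f z i
        - (1/2 : ℂ) * (Real.exp (2 * ρ z) : ℂ) * WZ (Fc f) z i := by
  have e0 : WZb (WZ (WZ (Fc f))) z i
      = wirtZ (wirtZbar (fun w => WZ (Fc f) w i)) z :=
    (wirtZ_wirtZbar_comm (smooth_Fz hf.1 i) z).symm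
  rw [e0, show wirtZbar (fun w => WZ (Fc f) w i) = fun w => WZb (WZ (Fc f)) w i from rfl,
    show (fun w => WZb (WZ (Fc f)) w i)
      = fun w => (fun _ => -(1/2 : ℂ)) w * (fun w => ((Real.exp (2 * ρ w) : ℝ) : ℂ)) w
          * (fun w => Fc f w i) w from funext (fun w => hf.2.2.2.2.2 w i),
    wirtZ_mul3 (differentiableAt_const _) ((smooth_exp hf.2.1 2).differentiable (by simp) z)
      ((smooth_F hf.1 i).differentiable (by simp) z),
    wirtZ_const, wirtZ_exp_mul 2 ρ z (hf.2.1.differentiable (by simp) z)]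
  rw [show wirtZ (fun w => ((ρ w : ℝ) : ℂ)) z = dZ ρ z from rfl,
    show wirtZ (fun w => Fc f w i) z = WZ (Fc f) z i from rfl]
  push_cast
  ring

/-- `Ω_z̄ = -((1/2)e^{2ρ} + 2 ρ_{zz̄}) F_z`. -/
lemma id_WZbHopf (hf : IsConfMinImm f ρ) (z : ℂ) (i : Fin m) :
    WZb (Hopf f ρ) z i
      = -((1/2 : ℂ) * (Real.exp (2 * ρ z) : ℂ) + 2 * wirtZbar (dZ ρ) z)
        * WZ (Fc f) z i := by
  have dFz : DifferentiableAt ℝ (fun w => WZ (Fc f) w i) z :=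
    (smooth_Fz hf.1 i).differentiable (by simp) z
  have dFzz : DifferentiableAt ℝ (fun w => WZ (WZ (Fc f)) w i) z :=
    (smooth_Fzz hf.1 i).differentiable (by simp) z
  have ddZ : DifferentiableAt ℝ (dZ ρ) z := (smooth_dZ hf.2.1).differentiable (by simp) z
  have e0 : WZb (Hopf f ρ) z i
      = wirtZbar (fun w => (fun w => WZ (WZ (Fc f)) w i) w
          - (fun w => 2 * dZ ρ w * WZ (Fc f) w i) w) z := rfl
  rw [e0, wirtZbar_sub dFzz (((differentiableAt_const _).fun_mul ddZ).fun_mul dFz),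
    show (fun w => 2 * dZ ρ w * WZ (Fc f) w i)
      = fun w => (fun _ => (2:ℂ)) w * (dZ ρ) w * (fun w => WZ (Fc f) w i) w from rfl,
    wirtZbar_mul3 (differentiableAt_const _) ddZ dFz, wirtZbar_const]
  rw [show wirtZbar (fun w => WZ (WZ (Fc f)) w i) z = WZb (WZ (WZ (Fc f))) z i from rfl,
    id_Fzzzb hf,
    show wirtZbar (fun w => WZ (Fc f) w i) z = WZb (WZ (Fc f)) z i from rfl,
    hf.2.2.2.2.2 z i]
  ring

lemma id_conjFzb (z : ℂ) : conjV (WZb (Fc f) z) = WZ (Fc f) z := by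
  rw [id_Fzb_eq, conjV_conjV]

lemma id_conjF (z : ℂ) : conjV (Fc f z) = Fc f z := by
  rw [show Fc f z = cV (f z) from rfl, conjV_cV]

/-- `⟨F, Ω̄⟩ = 0`. -/
lemma id_FconjHopf (hf : IsConfMinImm f ρ) (z : ℂ) :
    pairC (Fc f z) (conjV (Hopf f ρ z)) = 0 := by
  have := congrArg (starRingEnd ℂ) (id_FHopf hf z)
  rw [← pairC_conj, id_conjF, map_zero] at this
  exact this

/-- `⟨F_z, Ω̄⟩ = 0`. -/
lemma id_FzconjHopf (hf : IsConfMinImm f ρ) (z : ℂ) :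
    pairC (WZ (Fc f) z) (conjV (Hopf f ρ z)) = 0 := by
  have := congrArg (starRingEnd ℂ) (id_FzbHopf hf z)
  rw [← pairC_conj, id_conjFzb, map_zero] at this
  exact this

/-- `⟨F_z̄, Ω̄⟩ = 0`. -/
lemma id_FzbconjHopf (hf : IsConfMinImm f ρ) (z : ℂ) :
    pairC (WZb (Fc f) z) (conjV (Hopf f ρ z)) = 0 := by
  have := congrArg (starRingEnd ℂ) (id_FzHopf hf z)
  rw [← pairC_conj, ← id_Fzb_eq, map_zero] at this
  exact this

lemma pairC_add_right {k : ℕ} (X u v : Fin k → ℂ) :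
    pairC X (fun i => u i + v i) = pairC X u + pairC X v := by
  rw [pairC_comm, pairC_add_left, pairC_comm u X, pairC_comm v X]

lemma id_Fzz_decomp (z : ℂ) :
    WZ (WZ (Fc f)) z = fun i => Hopf f ρ z i + (2 * dZ ρ z) * WZ (Fc f) z i := by
  funext i; simp [Hopf]

lemma id_Fzbzb_decomp (hf : IsConfMinImm f ρ) (z : ℂ) :
    WZb (WZb (Fc f)) z
      = fun i => conjV (Hopf f ρ z) i
          + (2 * (starRingEnd ℂ) (dZ ρ z)) * WZb (Fc f) z i := by
  funext i
  rw [id_Fzzbb hf, show WZ (WZ (Fc f)) z i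
      = Hopf f ρ z i + (2 * dZ ρ z) * WZ (Fc f) z i from congrFun (id_Fzz_decomp z) i]
  simp only [map_add, map_mul, conjV, id_Fzb_conj, map_ofNat]
  try push_cast
  try ring

/-- `⟨F_zz, F_z̄z̄⟩ = ⟨Ω,Ω̄⟩ + 2 ρ_z ρ̄_z e^{2ρ}`. -/
lemma id_FzzconjFzz (hf : IsConfMinImm f ρ) (z : ℂ) :
    pairC (WZ (WZ (Fc f)) z) (WZb (WZb (Fc f)) z)
      = pairC (Hopf f ρ z) (conjV (Hopf f ρ z))
        + 2 * dZ ρ z * (starRingEnd ℂ) (dZ ρ z) * (Real.exp (2 * ρ z) : ℂ) := by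
  rw [id_Fzz_decomp, id_Fzbzb_decomp hf]
  simp only [pairC_add_left, pairC_add_right, pairC_smul_left, pairC_smul_right]
  rw [pairC_comm (Hopf f ρ z) (WZb (Fc f) z), id_FzbHopf hf, id_FzconjHopf hf,
    id_FzFzb hf]
  ring

/-- Gauss equation: `ρ_{zz̄} e^{2ρ} = ⟨Ω,Ω̄⟩ - (1/4) e^{4ρ}`. -/
lemma id_Gauss (hf : IsConfMinImm f ρ) (z : ℂ) :
    wirtZbar (dZ ρ) z * (Real.exp (2 * ρ z) : ℂ)
      = pairC (Hopf f ρ z) (conjV (Hopf f ρ z))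
        - (1/4 : ℂ) * (Real.exp (2 * ρ z) : ℂ) ^ 2 := by
  have dFzb : ∀ i, DifferentiableAt ℝ (fun w => WZb (Fc f) w i) z := fun i =>
    (smooth_Fzb hf.1 i).differentiable (by simp) z
  have dFzz : ∀ i, DifferentiableAt ℝ (fun w => WZ (WZ (Fc f)) w i) z := fun i =>
    (smooth_Fzz hf.1 i).differentiable (by simp) z
  have e1 := wirtZbar_pairC (WZ (WZ (Fc f))) (WZb (Fc f)) z dFzz dFzb
  rw [show (fun w => pairC (WZ (WZ (Fc f)) w) (WZb (Fc f) w))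
      = fun w => (dZ ρ) w * (fun w => ((Real.exp (2 * ρ w) : ℝ) : ℂ)) w from
    funext (fun w => id_FzzFzb hf w),
    wirtZbar_mul ((smooth_dZ hf.2.1).differentiable (by simp) z)
      ((smooth_exp hf.2.1 2).differentiable (by simp) z),
    wirtZbar_exp_mul 2 ρ z (hf.2.1.differentiable (by simp) z), id_dZbar] at e1
  rw [show WZb (WZ (WZ (Fc f))) z
      = fun i => -(dZ ρ z) * (Real.exp (2 * ρ z) : ℂ) * Fc f z i
          - (1/2 : ℂ) * (Real.exp (2 * ρ z) : ℂ) * WZ (Fc f) z i from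
    funext (fun i => id_Fzzzb hf z i),
    pairC_sub_left', pairC_smul_left, pairC_smul_left,
    id_FFzb hf, id_FzFzb hf] at e1
  rw [show WZb (WZb (Fc f)) z = _ from rfl, id_FzzconjFzz hf] at e1
  push_cast at e1 ⊢
  linear_combination e1

lemma pairC_zero_left {k : ℕ} (X : Fin k → ℂ) : pairC (fun _ => (0:ℂ)) X = 0 := by
  simp [pairC]

lemma smooth_pairC_const (u : Fin m → ℂ) (v : ℂ → Fin m → ℂ)
    (hv : ∀ i, ContDiff ℝ (⊤ : ℕ∞) (fun w => v w i)) :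
    ContDiff ℝ (⊤ : ℕ∞) (fun w => pairC u (v w)) := by
  exact ContDiff.sum fun i _ => contDiff_const.mul (hv i)

lemma wirtZ_pairC_const (u : Fin m → ℂ) (v : ℂ → Fin m → ℂ) (z : ℂ)
    (hv : ∀ i, DifferentiableAt ℝ (fun w => v w i) z) :
    wirtZ (fun w => pairC u (v w)) z = pairC u (WZ v z) := by
  have e1 := wirtZ_pairC (fun _ => u) v z (fun i => differentiableAt_const _) hv
  rw [show WZ (fun _ => u) z = fun _ => (0:ℂ) from funext fun i => wirtZ_const _ _,
    pairC_zero_left] at e1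
  rw [e1]
  ring

lemma wirtZbar_pairC_const (u : Fin m → ℂ) (v : ℂ → Fin m → ℂ) (z : ℂ)
    (hv : ∀ i, DifferentiableAt ℝ (fun w => v w i) z) :
    wirtZbar (fun w => pairC u (v w)) z = pairC u (WZb v z) := by
  have e1 := wirtZbar_pairC (fun _ => u) v z (fun i => differentiableAt_const _) hv
  rw [show WZb (fun _ => u) z = fun _ => (0:ℂ) from funext fun i => wirtZbar_const _ _,
    pairC_zero_left] at e1
  rw [e1]
  ring

variable {E : Fin m → ℝ}

lemma eid_az (hf : IsConfMinImm f ρ) (z : ℂ) :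
    wirtZ (fun w => pairC (cV E) (Fc f w)) z = pairC (cV E) (WZ (Fc f) z) :=
  wirtZ_pairC_const (cV E) (Fc f) z (fun i => (smooth_F hf.1 i).differentiable (by simp) z)

lemma eid_b_z (hf : IsConfMinImm f ρ) (z : ℂ) :
    wirtZ (fun w => pairC (cV E) (WZ (Fc f) w)) z
      = pairC (cV E) (Hopf f ρ z) + 2 * dZ ρ z * pairC (cV E) (WZ (Fc f) z) := by
  rw [wirtZ_pairC_const (cV E) (WZ (Fc f)) z
    (fun i => (smooth_Fz hf.1 i).differentiable (by simp) z), id_Fzz_decomp,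
    pairC_add_right, pairC_smul_right]

lemma eid_bc_z (hf : IsConfMinImm f ρ) (z : ℂ) :
    wirtZ (fun w => pairC (cV E) (WZb (Fc f) w)) z
      = -(1/2 : ℂ) * (Real.exp (2 * ρ z) : ℂ) * pairC (cV E) (Fc f z) := by
  rw [wirtZ_pairC_const (cV E) (WZb (Fc f)) z
    (fun i => (smooth_Fzb hf.1 i).differentiable (by simp) z),
    show WZ (WZb (Fc f)) z
      = fun i => (-(1/2 : ℂ) * (Real.exp (2 * ρ z) : ℂ)) * Fc f z i from
      funext fun i => by rw [id_Fzbz hf], pairC_smul_right]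

lemma eid_bc_zb (hf : IsConfMinImm f ρ) (z : ℂ) :
    wirtZbar (fun w => pairC (cV E) (WZb (Fc f) w)) z
      = pairC (cV E) (conjV (Hopf f ρ z))
        + 2 * (starRingEnd ℂ) (dZ ρ z) * pairC (cV E) (WZb (Fc f) z) := by
  rw [wirtZbar_pairC_const (cV E) (WZb (Fc f)) z
    (fun i => (smooth_Fzb hf.1 i).differentiable (by simp) z), id_Fzbzb_decomp hf,
    pairC_add_right, pairC_smul_right]

lemma eid_bc_conj (hf : IsConfMinImm f ρ) (z : ℂ) :
    pairC (cV E) (WZb (Fc f) z) = (starRingEnd ℂ) (pairC (cV E) (WZ (Fc f) z)) := by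
  rw [← pairC_conj, conjV_cV, ← id_Fzb_eq]

lemma eid_a_real (hf : IsConfMinImm f ρ) (z : ℂ) :
    (starRingEnd ℂ) (pairC (cV E) (Fc f z)) = pairC (cV E) (Fc f z) := by
  rw [← pairC_conj, conjV_cV, id_conjF]

lemma eid_omega_conj (hf : IsConfMinImm f ρ) (z : ℂ) :
    pairC (cV E) (conjV (Hopf f ρ z)) = (starRingEnd ℂ) (pairC (cV E) (Hopf f ρ z)) := by
  rw [← pairC_conj, conjV_cV]

lemma exp_mul_exp (z : ℂ) :
    ((Real.exp (-2 * ρ z) : ℝ) : ℂ) * ((Real.exp (2 * ρ z) : ℝ) : ℂ) = 1 := by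
  norm_cast
  rw [← Real.exp_add]
  norm_num

lemma exp_ne_zero' (c : ℝ) (z : ℂ) : ((Real.exp (c * ρ z) : ℝ) : ℂ) ≠ 0 := by
  simp [Real.exp_ne_zero]

lemma exp_inv_form (z : ℂ) :
    ((Real.exp (2 * ρ z) : ℝ) : ℂ) = (((Real.exp (-2 * ρ z) : ℝ) : ℂ))⁻¹ := by
  exact eq_inv_of_mul_eq_one_left (by rw [mul_comm]; exact exp_mul_exp z)

lemma exp_neg4 (z : ℂ) :
    ((Real.exp (-4 * ρ z) : ℝ) : ℂ) = (((Real.exp (-2 * ρ z) : ℝ) : ℂ)) ^ 2 := by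
  have : Real.exp (-4 * ρ z) = Real.exp (-2 * ρ z) ^ 2 := by
    rw [sq, ← Real.exp_add]
    ring_nf
  rw [this]
  push_cast
  ring

lemma eperp_decomp (z : ℂ) :
    Eperp f ρ E z = fun i => cV E i - (pairC (cV E) (Fc f z)) * Fc f z i
      - (2 * (Real.exp (-2 * ρ z) : ℂ) * pairC (cV E) (WZ (Fc f) z)) * WZb (Fc f) z i
      - (2 * (Real.exp (-2 * ρ z) : ℂ) * pairC (cV E) (WZb (Fc f) z)) * WZ (Fc f) z i := rfl

lemma nf_F (hf : IsConfMinImm f ρ) (z : ℂ) :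
    pairC (Eperp f ρ E z) (Fc f z) = 0 := by
  rw [eperp_decomp, pairC_lin4, id_FF hf,
    pairC_comm (WZb (Fc f) z) (Fc f z), id_FFzb hf,
    pairC_comm (WZ (Fc f) z) (Fc f z), id_FFz hf]
  ring

lemma nf_Fz (hf : IsConfMinImm f ρ) (z : ℂ) :
    pairC (Eperp f ρ E z) (WZ (Fc f) z) = 0 := by
  rw [eperp_decomp, pairC_lin4, id_FFz hf,
    pairC_comm (WZb (Fc f) z) (WZ (Fc f) z), id_FzFzb hf, hf.2.2.2.1 z]
  linear_combination (-pairC (cV E) (WZ (Fc f) z)) * exp_mul_exp (ρ := ρ) z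

lemma nf_Fzb (hf : IsConfMinImm f ρ) (z : ℂ) :
    pairC (Eperp f ρ E z) (WZb (Fc f) z) = 0 := by
  rw [eperp_decomp, pairC_lin4, id_FFzb hf, id_FzFzb hf]
  have h4 : pairC (WZb (Fc f) z) (WZb (Fc f) z)
      = (starRingEnd ℂ) (pairC (WZ (Fc f) z) (WZ (Fc f) z)) := by
    rw [← pairC_conj, ← id_Fzb_eq]
  rw [h4, hf.2.2.2.1 z, map_zero]
  linear_combination (-pairC (cV E) (WZb (Fc f) z)) * exp_mul_exp (ρ := ρ) z

lemma pair_Eperp_Hopf (hf : IsConfMinImm f ρ) (z : ℂ) :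
    pairC (Eperp f ρ E z) (Hopf f ρ z) = pairC (cV E) (Hopf f ρ z) := by
  rw [eperp_decomp, pairC_lin4, id_FHopf hf, id_FzbHopf hf, id_FzHopf hf]
  ring

lemma pair_Eperp_conjHopf (hf : IsConfMinImm f ρ) (z : ℂ) :
    pairC (Eperp f ρ E z) (conjV (Hopf f ρ z)) = pairC (cV E) (conjV (Hopf f ρ z)) := by
  rw [eperp_decomp, pairC_lin4, id_FconjHopf hf, id_FzbconjHopf hf, id_FzconjHopf hf]
  ring

lemma WZ_Eperp (hf : IsConfMinImm f ρ) (z : ℂ) (i : Fin m) :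
    WZ (Eperp f ρ E) z i
      = -2 * (Real.exp (-2 * ρ z) : ℂ) * pairC (cV E) (Hopf f ρ z) * WZb (Fc f) z i
        - 2 * (Real.exp (-2 * ρ z) : ℂ) * pairC (cV E) (WZb (Fc f) z) * Hopf f ρ z i := by
  have dF : DifferentiableAt ℝ (fun w => Fc f w i) z :=
    (smooth_F hf.1 i).differentiable (by simp) z
  have dFz : DifferentiableAt ℝ (fun w => WZ (Fc f) w i) z :=
    (smooth_Fz hf.1 i).differentiable (by simp) z
  have dFzb : DifferentiableAt ℝ (fun w => WZb (Fc f) w i) z :=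
    (smooth_Fzb hf.1 i).differentiable (by simp) z
  have da : DifferentiableAt ℝ (fun w => pairC (cV E) (Fc f w)) z :=
    (smooth_pairC_const (cV E) (Fc f) (fun j => smooth_F hf.1 j)).differentiable (by simp) z
  have db : DifferentiableAt ℝ (fun w => pairC (cV E) (WZ (Fc f) w)) z :=
    (smooth_pairC_const (cV E) (WZ (Fc f)) (fun j => smooth_Fz hf.1 j)).differentiable (by simp) z
  have dbc : DifferentiableAt ℝ (fun w => pairC (cV E) (WZb (Fc f) w)) z :=
    (smooth_pairC_const (cV E) (WZb (Fc f)) (fun j => smooth_Fzb hf.1 j)).differentiable (by simp) z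
  have dem : DifferentiableAt ℝ (fun w => ((Real.exp (-2 * ρ w) : ℝ) : ℂ)) z :=
    (smooth_exp hf.2.1 (-2)).differentiable (by simp) z
  show wirtZ (fun w => ((E i : ℝ) : ℂ) - pairC (cV E) (Fc f w) * Fc f w i
      - 2 * ((Real.exp (-2 * ρ w) : ℝ) : ℂ) * pairC (cV E) (WZ (Fc f) w) * WZb (Fc f) w i
      - 2 * ((Real.exp (-2 * ρ w) : ℝ) : ℂ) * pairC (cV E) (WZb (Fc f) w) * WZ (Fc f) w i) z
      = _
  rw [wirtZ_sub (((differentiableAt_const _).fun_sub (da.fun_mul dF)).fun_sub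
      ((((differentiableAt_const (2:ℂ)).fun_mul dem).fun_mul db).fun_mul dFzb))
      ((((differentiableAt_const (2:ℂ)).fun_mul dem).fun_mul dbc).fun_mul dFz),
    wirtZ_sub ((differentiableAt_const _).fun_sub (da.fun_mul dF))
      ((((differentiableAt_const (2:ℂ)).fun_mul dem).fun_mul db).fun_mul dFzb),
    wirtZ_sub (differentiableAt_const _) (da.fun_mul dF),
    wirtZ_const, wirtZ_mul da dF,
    wirtZ_mul4 (differentiableAt_const (2:ℂ)) dem db dFzb,
    wirtZ_mul4 (differentiableAt_const (2:ℂ)) dem dbc dFz,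
    wirtZ_const, eid_az hf, eid_b_z hf, eid_bc_z hf,
    wirtZ_exp_mul (-2) ρ z (hf.2.1.differentiable (by simp) z),
    show wirtZ (fun w => Fc f w i) z = WZ (Fc f) z i from rfl,
    show wirtZ (fun w => WZb (Fc f) w i) z = WZ (WZb (Fc f)) z i from rfl,
    show wirtZ (fun w => WZ (Fc f) w i) z = WZ (WZ (Fc f)) z i from rfl,
    id_Fzbz hf,
    show wirtZ (fun w => ((ρ w : ℝ) : ℂ)) z = dZ ρ z from rfl,
    show WZ (WZ (Fc f)) z i = Hopf f ρ z i + (2 * dZ ρ z) * WZ (Fc f) z i from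
      congrFun (id_Fzz_decomp z) i,
    exp_inv_form (ρ := ρ) z]
  have h0 : (((Real.exp (-2 * ρ z) : ℝ)) : ℂ) ≠ 0 := exp_ne_zero' (-2) z
  push_cast
  field_simp
  ring

lemma NZ_Eperp (hf : IsConfMinImm f ρ) (z : ℂ) (i : Fin m) :
    NZ f ρ (Eperp f ρ E) z i
      = -2 * (Real.exp (-2 * ρ z) : ℂ) * pairC (cV E) (WZb (Fc f) z) * Hopf f ρ z i := by
  show WZ (Eperp f ρ E) z i + 2 * (Real.exp (-2 * ρ z) : ℂ)
      * pairC (Eperp f ρ E z) (Hopf f ρ z) * WZb (Fc f) z i = _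
  rw [WZ_Eperp hf, pair_Eperp_Hopf hf]
  ring

lemma conj_Fc (z : ℂ) (i : Fin m) : (starRingEnd ℂ) (Fc f z i) = Fc f z i :=
  Complex.conj_ofReal _

lemma conj_Eperp (hf : IsConfMinImm f ρ) (z : ℂ) :
    conjV (Eperp f ρ E z) = Eperp f ρ E z := by
  funext i
  show (starRingEnd ℂ) (Eperp f ρ E z i) = Eperp f ρ E z i
  rw [congrFun (eperp_decomp (E := E) z) i]
  simp only [map_sub, map_mul, map_ofNat, Complex.conj_ofReal, conj_Fc,
    eid_a_real hf, id_Fzb_conj, Complex.conj_conj, cV]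
  have h5 : (starRingEnd ℂ) (pairC (cV E) (WZb (Fc f) z)) = pairC (cV E) (WZ (Fc f) z) := by
    rw [eid_bc_conj hf z, Complex.conj_conj]
  rw [h5, ← eid_bc_conj hf]
  ring

lemma NZb_Eperp_conj (hf : IsConfMinImm f ρ) (z : ℂ) (i : Fin m) :
    NZb f ρ (Eperp f ρ E) z i = (starRingEnd ℂ) (NZ f ρ (Eperp f ρ E) z i) := by
  have h1 : WZb (Eperp f ρ E) z i = (starRingEnd ℂ) (WZ (Eperp f ρ E) z i) := by
    show wirtZbar (fun w => Eperp f ρ E w i) z = _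
    rw [show (fun w => Eperp f ρ E w i)
        = fun w => (starRingEnd ℂ) ((fun w => Eperp f ρ E w i) w) from
      funext fun w => (congrFun (conj_Eperp hf w) i).symm, wirtZbar_conj]
    rfl
  have h2 : pairC (Eperp f ρ E z) (conjV (Hopf f ρ z))
      = (starRingEnd ℂ) (pairC (Eperp f ρ E z) (Hopf f ρ z)) := by
    rw [← pairC_conj, conj_Eperp hf]
  show WZb (Eperp f ρ E) z i + 2 * (Real.exp (-2 * ρ z) : ℂ)
      * pairC (Eperp f ρ E z) (conjV (Hopf f ρ z)) * WZ (Fc f) z i = _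
  rw [h1, h2, ← id_conjFzb]
  show _ = (starRingEnd ℂ) (WZ (Eperp f ρ E) z i + 2 * (Real.exp (-2 * ρ z) : ℂ)
      * pairC (Eperp f ρ E z) (Hopf f ρ z) * WZb (Fc f) z i)
  simp only [map_add, map_mul, map_ofNat, Complex.conj_ofReal, conjV]

lemma NZbNZ_Eperp (hf : IsConfMinImm f ρ) (z : ℂ) (i : Fin m) :
    NZb f ρ (NZ f ρ (Eperp f ρ E)) z i
      = -2 * (Real.exp (-2 * ρ z) : ℂ) * pairC (cV E) (conjV (Hopf f ρ z))
        * Hopf f ρ z i := by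
  have dHopf : DifferentiableAt ℝ (fun w => Hopf f ρ w i) z :=
    (smooth_Hopf hf.1 hf.2.1 i).differentiable (by simp) z
  have dbc : DifferentiableAt ℝ (fun w => pairC (cV E) (WZb (Fc f) w)) z :=
    (smooth_pairC_const (cV E) (WZb (Fc f)) (fun j => smooth_Fzb hf.1 j)).differentiable (by simp) z
  have dem : DifferentiableAt ℝ (fun w => ((Real.exp (-2 * ρ w) : ℝ) : ℂ)) z :=
    (smooth_exp hf.2.1 (-2)).differentiable (by simp) z
  have hfun : (fun w => NZ f ρ (Eperp f ρ E) w i)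
      = fun w => (-2 : ℂ) * ((Real.exp (-2 * ρ w) : ℝ) : ℂ)
          * pairC (cV E) (WZb (Fc f) w) * Hopf f ρ w i :=
    funext fun w => NZ_Eperp hf w i
  have hWZb : WZb (NZ f ρ (Eperp f ρ E)) z i
      = wirtZbar (fun w => (-2 : ℂ) * ((Real.exp (-2 * ρ w) : ℝ) : ℂ)
          * pairC (cV E) (WZb (Fc f) w) * Hopf f ρ w i) z := by
    show wirtZbar (fun w => NZ f ρ (Eperp f ρ E) w i) z = _
    rw [hfun]
  have hpair : pairC (NZ f ρ (Eperp f ρ E) z) (conjV (Hopf f ρ z))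
      = (-2 * (Real.exp (-2 * ρ z) : ℂ) * pairC (cV E) (WZb (Fc f) z))
        * pairC (Hopf f ρ z) (conjV (Hopf f ρ z)) := by
    rw [show NZ f ρ (Eperp f ρ E) z
        = fun j => (-2 * (Real.exp (-2 * ρ z) : ℂ) * pairC (cV E) (WZb (Fc f) z))
            * Hopf f ρ z j from funext fun j => NZ_Eperp hf z j, pairC_smul_left]
  have hr : wirtZbar (dZ ρ) z
      = (Real.exp (-2 * ρ z) : ℂ) * pairC (Hopf f ρ z) (conjV (Hopf f ρ z))
        - (1/4 : ℂ) * (Real.exp (2 * ρ z) : ℂ) := by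
    linear_combination (Real.exp (-2 * ρ z) : ℂ) * (id_Gauss hf z)
      + (-(wirtZbar (dZ ρ) z) - (1/4 : ℂ) * (Real.exp (2 * ρ z) : ℂ))
        * exp_mul_exp (ρ := ρ) z
  show WZb (NZ f ρ (Eperp f ρ E)) z i + 2 * (Real.exp (-2 * ρ z) : ℂ)
      * pairC (NZ f ρ (Eperp f ρ E) z) (conjV (Hopf f ρ z)) * WZ (Fc f) z i = _
  rw [hWZb, hpair,
    wirtZbar_mul4 (differentiableAt_const (-2 : ℂ)) dem dbc dHopf,
    wirtZbar_const, wirtZbar_exp_mul (-2) ρ z (hf.2.1.differentiable (by simp) z),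
    id_dZbar, eid_bc_zb hf,
    show wirtZbar (fun w => Hopf f ρ w i) z = WZb (Hopf f ρ) z i from rfl,
    id_WZbHopf hf, hr, exp_inv_form (ρ := ρ) z]
  have h0 : (((Real.exp (-2 * ρ z) : ℝ)) : ℂ) ≠ 0 := exp_ne_zero' (-2) z
  push_cast
  field_simp
  ring

lemma NZNZb_Eperp (hf : IsConfMinImm f ρ) (z : ℂ) (i : Fin m) :
    NZ f ρ (NZb f ρ (Eperp f ρ E)) z i
      = (starRingEnd ℂ) (NZb f ρ (NZ f ρ (Eperp f ρ E)) z i) := by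
  have hfun : (fun w => NZb f ρ (Eperp f ρ E) w i)
      = fun w => (starRingEnd ℂ) ((fun w => NZ f ρ (Eperp f ρ E) w i) w) :=
    funext fun w => NZb_Eperp_conj hf w i
  have h1 : WZ (NZb f ρ (Eperp f ρ E)) z i
      = (starRingEnd ℂ) (WZb (NZ f ρ (Eperp f ρ E)) z i) := by
    show wirtZ (fun w => NZb f ρ (Eperp f ρ E) w i) z = _
    rw [hfun, wirtZ_conj]
    rfl
  have hv : NZb f ρ (Eperp f ρ E) z = conjV (NZ f ρ (Eperp f ρ E) z) :=
    funext fun j => NZb_Eperp_conj hf z j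
  have h2 : pairC (NZb f ρ (Eperp f ρ E) z) (Hopf f ρ z)
      = (starRingEnd ℂ) (pairC (NZ f ρ (Eperp f ρ E) z) (conjV (Hopf f ρ z))) := by
    calc pairC (NZb f ρ (Eperp f ρ E) z) (Hopf f ρ z)
        = pairC (conjV (NZ f ρ (Eperp f ρ E) z)) (conjV (conjV (Hopf f ρ z))) := by
          rw [hv, conjV_conjV]
      _ = (starRingEnd ℂ) (pairC (NZ f ρ (Eperp f ρ E) z) (conjV (Hopf f ρ z))) :=
          pairC_conj _ _
  show WZ (NZb f ρ (Eperp f ρ E)) z i + 2 * (Real.exp (-2 * ρ z) : ℂ)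
      * pairC (NZb f ρ (Eperp f ρ E) z) (Hopf f ρ z) * WZb (Fc f) z i = _
  rw [h1, h2, id_Fzb_conj]
  show _ = (starRingEnd ℂ) (WZb (NZ f ρ (Eperp f ρ E)) z i + 2 * (Real.exp (-2 * ρ z) : ℂ)
      * pairC (NZ f ρ (Eperp f ρ E) z) (conjV (Hopf f ρ z)) * WZ (Fc f) z i)
  simp only [map_add, map_mul, map_ofNat, Complex.conj_ofReal]

end Main
/-- for every constant vector `E`, the normal projection `E^⊥` is a normal
field and is a Jacobi eigenfield with eigenvalue `−2`, i.e. `𝓛(E^⊥) = 2 E^⊥`. -/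
theorem eperp_jacobi_eigenfield (n : ℕ) (hn : 3 ≤ n)
    (f : ℂ → Fin (n + 1) → ℝ) (ρ : ℂ → ℝ) (hf : IsConfMinImm f ρ)
    (E : Fin (n + 1) → ℝ) :
    IsNormalField f (Eperp f ρ E) ∧
    ∀ (z : ℂ) (i : Fin (n + 1)), Jacobi f ρ (Eperp f ρ E) z i = 2 * Eperp f ρ E z i := by
  constructor
  · intro z
    exact ⟨nf_F hf z, nf_Fz hf z, nf_Fzb hf z⟩
  · intro z i
    show LapPerp f ρ (Eperp f ρ E) z i + 2 * Eperp f ρ E z i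
        + 4 * (Real.exp (-4 * ρ z) : ℂ)
          * (pairC (Eperp f ρ E z) (Hopf f ρ z) * conjV (Hopf f ρ z) i
            + pairC (Eperp f ρ E z) (conjV (Hopf f ρ z)) * Hopf f ρ z i)
        = 2 * Eperp f ρ E z i
    rw [show LapPerp f ρ (Eperp f ρ E) z i
        = 2 * (Real.exp (-2 * ρ z) : ℂ) * (NZb f ρ (NZ f ρ (Eperp f ρ E)) z i
          + NZ f ρ (NZb f ρ (Eperp f ρ E)) z i) from rfl,
      NZNZb_Eperp hf z i, NZbNZ_Eperp hf z i,
      pair_Eperp_Hopf hf, pair_Eperp_conjHopf hf, exp_neg4 (ρ := ρ) z,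
      eid_omega_conj hf]
    simp only [map_mul, map_neg, map_ofNat, Complex.conj_ofReal, Complex.conj_conj, conjV]
    ring
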